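/- Define H(t, x) = (2μ²(T−t) − 2μx + 3)·Φ((x − μ(T−t))/√(T−t)) − 2μ√(T−t)·φ((x − μ(T−t))/√(T−t)) − e^{2μx}·Φ((−x − μ(T−t))/√(T−t)) − 2(1 + μ²(T−t)) for 0 ≤ t < T and x ≥ 0. Then the partial derivative of H with respect to t equals H_t(t, x) = 2((x + μ(T−t))/(T−t)^{3/2})·φ((x − μ(T−t))/√(T−t)) + 2μ²(1 − Φ((x − μ(T−t))/√(T−t))). -/

import Mathlib

/-! Differentiate term by term. With `s = T - t` and `a = (x - μ s)/√s`, the reflection identity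
`e^{2μx} φ((-x - μ s)/√s) = φ(a)` puts every density term on the common factor `φ(a)`;
the `-2μ² Φ(a)` from the polynomial prefactor and the `+2μ²` from the constant give
`2μ² (1 - Φ(a))`. -/

open Set

/-- Standard normal CDF. -/
noncomputable def stdNormalCDF (x : ℝ) : ℝ :=
  ∫ t in Iic x, (Real.sqrt (2 * Real.pi))⁻¹ * Real.exp (-(t ^ 2) / 2)

/-- Standard normal density. -/
noncomputable def stdNormalPDF (x : ℝ) : ℝ :=
  (Real.sqrt (2 * Real.pi))⁻¹ * Real.exp (-(x ^ 2) / 2)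

/-- The function `H` from (4.2). -/
noncomputable def Hfun (μ T t x : ℝ) : ℝ :=
  (2 * μ ^ 2 * (T - t) - 2 * μ * x + 3) *
      stdNormalCDF ((x - μ * (T - t)) / Real.sqrt (T - t))
    - 2 * μ * Real.sqrt (T - t) * stdNormalPDF ((x - μ * (T - t)) / Real.sqrt (T - t))
    - Real.exp (2 * μ * x) * stdNormalCDF ((-x - μ * (T - t)) / Real.sqrt (T - t))
    - 2 * (1 + μ ^ 2 * (T - t))

lemma continuous_stdNormalPDF : Continuous stdNormalPDF := by
  unfold stdNormalPDF
  fun_prop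

lemma integrable_stdNormalPDF : MeasureTheory.Integrable stdNormalPDF := by
  convert (integrable_exp_neg_mul_sq (show (0:ℝ) < 1 / 2 by norm_num)).const_mul
    (Real.sqrt (2 * Real.pi))⁻¹ using 2 with y
  unfold stdNormalPDF
  ring_nf

lemma hasDerivAt_stdNormalCDF (y : ℝ) : HasDerivAt stdNormalCDF (stdNormalPDF y) y := by
  have hCDF : stdNormalCDF = fun z => stdNormalCDF 0 + ∫ u in (0:ℝ)..z, stdNormalPDF u := by
    funext z
    rw [← intervalIntegral.integral_Iic_sub_Iic integrable_stdNormalPDF.integrableOn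
      integrable_stdNormalPDF.integrableOn]
    unfold stdNormalCDF stdNormalPDF
    ring
  rw [hCDF]
  exact (intervalIntegral.integral_hasDerivAt_right integrable_stdNormalPDF.intervalIntegrable
    (continuous_stdNormalPDF.stronglyMeasurableAtFilter _ _)
    continuous_stdNormalPDF.continuousAt).const_add _

lemma hasDerivAt_stdNormalPDF (y : ℝ) : HasDerivAt stdNormalPDF (-y * stdNormalPDF y) y := by
  have hexp : HasDerivAt (fun y : ℝ => -(y ^ 2) / 2) (-y) y := by
    refine (((hasDerivAt_pow 2 y).neg).div_const 2).congr_deriv ?_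
    push_cast
    ring
  refine (((Real.hasDerivAt_exp _).comp y hexp).const_mul
    (Real.sqrt (2 * Real.pi))⁻¹).congr_deriv ?_
  unfold stdNormalPDF
  ring

lemma exp_mul_stdNormalPDF_reflect (μ x : ℝ) {s : ℝ} (hs : 0 < s) :
    Real.exp (2 * μ * x) * stdNormalPDF ((-x - μ * s) / Real.sqrt s)
      = stdNormalPDF ((x - μ * s) / Real.sqrt s) := by
  unfold stdNormalPDF
  rw [mul_left_comm, ← Real.exp_add, div_pow, div_pow, Real.sq_sqrt hs.le]
  congr 2
  field_simp
  ring

lemma hasDerivAt_standardized (μ T a : ℝ) {t : ℝ} (ht : t < T) :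
    HasDerivAt (fun t' => (a - μ * (T - t')) / Real.sqrt (T - t'))
      ((a + μ * (T - t)) / (2 * (T - t) * Real.sqrt (T - t))) t := by
  have hs : 0 < T - t := sub_pos.mpr ht
  have hsqrt_pos : 0 < Real.sqrt (T - t) := Real.sqrt_pos.mpr hs
  have hlin : HasDerivAt (fun t' : ℝ => T - t') (-1) t := (hasDerivAt_id' t).const_sub T
  have hsqrt := hlin.sqrt hs.ne'
  refine (((hlin.const_mul μ).const_sub a).div hsqrt hsqrt_pos.ne').congr_deriv ?_
  have hsq : Real.sqrt (T - t) ^ 2 = T - t := Real.sq_sqrt hs.le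
  field_simp
  rw [hsq]
  ring

lemma rpow_three_halves_eq_mul_sqrt {s : ℝ} (hs : 0 ≤ s) :
    s ^ ((3:ℝ) / 2) = s * Real.sqrt s := by
  rw [Real.sqrt_eq_rpow, ← Real.rpow_one_add' hs (by norm_num)]
  norm_num

theorem Hfun_time_deriv_general (μ T : ℝ) (t x : ℝ)
    (ht : t ∈ Ico 0 T) :
    HasDerivAt (fun t' => Hfun μ T t' x)
      (2 * ((x + μ * (T - t)) / (T - t) ^ ((3:ℝ)/2)) *
          stdNormalPDF ((x - μ * (T - t)) / Real.sqrt (T - t))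
        + 2 * μ ^ 2 * (1 - stdNormalCDF ((x - μ * (T - t)) / Real.sqrt (T - t)))) t := by
  have hs : 0 < T - t := sub_pos.mpr ht.2
  have hlin : HasDerivAt (fun t' : ℝ => T - t') (-1) t := (hasDerivAt_id' t).const_sub T
  have hsqrt := hlin.sqrt hs.ne'
  have ha := hasDerivAt_standardized μ T x ht.2
  have hb := hasDerivAt_standardized μ T (-x) ht.2
  have hprefactor := ((hlin.const_mul (2 * μ ^ 2)).sub_const (2 * μ * x)).add_const 3
  have hΦa := (hasDerivAt_stdNormalCDF _).comp t ha
  have hφa := (hasDerivAt_stdNormalPDF _).comp t ha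
  have hΦb := (hasDerivAt_stdNormalCDF _).comp t hb
  have hH := (((hprefactor.mul hΦa).sub ((hsqrt.const_mul (2 * μ)).mul hφa)).sub
    (hΦb.const_mul (Real.exp (2 * μ * x)))).sub
    (((hlin.const_mul (μ ^ 2)).const_add 1).const_mul 2)
  refine hH.congr_deriv ?_
  have hreflect := exp_mul_stdNormalPDF_reflect μ x hs
  rw [rpow_three_halves_eq_mul_sqrt hs.le]
  simp only [Function.comp_apply, ← mul_assoc, hreflect]
  field_simp
  ring

/-- the time derivative of `H` is given by formula (4.20). -/
theorem Hfun_time_deriv (μ T : ℝ) (hT : 0 < T) (t x : ℝ)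
    (ht : t ∈ Ico 0 T) (hx : 0 ≤ x) :
    HasDerivAt (fun t' => Hfun μ T t' x)
      (2 * ((x + μ * (T - t)) / (T - t) ^ ((3:ℝ)/2)) *
          stdNormalPDF ((x - μ * (T - t)) / Real.sqrt (T - t))
        + 2 * μ ^ 2 * (1 - stdNormalCDF ((x - μ * (T - t)) / Real.sqrt (T - t)))) t :=
  Hfun_time_deriv_general μ T t x ht
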